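/- arXiv:2602.02715 — 4 statements merged into one kernel-verified Lean document; each statement's English description precedes it below -/
import Mathlib

section
/- Fix real numbers q > q' ≥ 0. Suppose g : (0,1] → ℝ is continuously differentiable, g(t) → 0 as t → 0 (more precisely g ∈ t^(q'+ε)L^∞ for some ε > 0 with q' + ε ≤ q), and sup_{t ∈ (0,1]} t^(-q) |t g'(t) - q' g(t)| < ∞. Then sup_{t ∈ (0,1]} t^(-q) |g(t)| ≤ (q - q')^(-1) sup_{t ∈ (0,1]} t^(-q) |t g'(t) - q' g(t)|. -/
/-- Weighted ODE estimate on `(0,1]` for the operator `t ∂_t - q'`: if `g` vanishes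
faster than `t^(q')` at `0` and `t g'(t) - q' g(t)` lies in `t^q L^∞`, then so does `g`,
with constant `(q - q')⁻¹`. -/
theorem stmt_5 (q q' : ℝ) (hq' : 0 ≤ q') (hqq' : q' < q)
    (g : ℝ → ℝ) (hg : ∀ t ∈ Set.Ioi (0 : ℝ), DifferentiableAt ℝ g t)
    (hvanish : ∃ ε > 0, q' + ε ≤ q ∧ ∃ C : ℝ, ∀ t ∈ Set.Ioc (0 : ℝ) 1,
      |g t| ≤ C * t ^ (q' + ε))
    (M : ℝ)
    (hM : ∀ t ∈ Set.Ioc (0 : ℝ) 1, |t * deriv g t - q' * g t| ≤ M * t ^ q) :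
    ∀ t ∈ Set.Ioc (0 : ℝ) 1, |g t| ≤ (q - q')⁻¹ * M * t ^ q := by
  obtain ⟨ε, hε, hεq, C, hC⟩ := hvanish
  set r := q - q' with hrdef
  have hr0 : 0 < r := sub_pos.mpr hqq'
  set h : ℝ → ℝ := fun u => u ^ (-q') * g u with hh
  have hM0 : 0 ≤ M := by
    have h1 := hM 1 ⟨one_pos, le_refl 1⟩
    have := abs_nonneg (1 * deriv g 1 - q' * g 1)
    simpa using this.trans h1
  -- derivative of h
  have hderiv : ∀ u : ℝ, 0 < u →
      HasDerivAt h (u ^ (-q' - 1) * (u * deriv g u - q' * g u)) u := by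
    intro u hu
    have h1 : HasDerivAt (fun x : ℝ => x ^ (-q')) (-q' * u ^ (-q' - 1)) u :=
      Real.hasDerivAt_rpow_const (Or.inl hu.ne')
    have h2 := h1.mul (hg u hu).hasDerivAt
    refine h2.congr_deriv ?_
    symm
    have hu1 : u ^ (-q' - 1) * u = u ^ (-q') := by
      rw [← Real.rpow_add_one hu.ne' (-q' - 1)]; norm_num
    calc u ^ (-q' - 1) * (u * deriv g u - q' * g u)
        = (u ^ (-q' - 1) * u) * deriv g u - q' * u ^ (-q' - 1) * g u := by ring
      _ = -q' * u ^ (-q' - 1) * g u + u ^ (-q') * deriv g u := by rw [hu1]; ring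
  -- derivative bound
  have hbound : ∀ u ∈ Set.Ioc (0 : ℝ) 1,
      |u ^ (-q' - 1) * (u * deriv g u - q' * g u)| ≤ M * u ^ (r - 1) := by
    intro u hu
    have hu0 : (0 : ℝ) < u := hu.1
    rw [abs_mul, abs_of_nonneg (Real.rpow_nonneg hu0.le _)]
    calc u ^ (-q' - 1) * |u * deriv g u - q' * g u|
        ≤ u ^ (-q' - 1) * (M * u ^ q) := by
          exact mul_le_mul_of_nonneg_left (hM u hu) (Real.rpow_nonneg hu0.le _)
      _ = M * u ^ (r - 1) := by
          rw [show r - 1 = -q' - 1 + q by rw [hrdef]; ring, Real.rpow_add hu0]; ring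
  -- key inequality: for 0 < s ≤ t, |h t| ≤ |h s| + (M/r) * t^r
  intro t ht
  have ht0 : (0 : ℝ) < t := ht.1
  have key : ∀ s ∈ Set.Ioc (0 : ℝ) t, |h t| ≤ |h s| + M / r * t ^ r := by
    intro s hs
    have hs0 : (0 : ℝ) < s := hs.1
    have hsub : Set.Icc s t ⊆ Set.Ioc (0 : ℝ) 1 := fun x hx =>
      ⟨hs0.trans_le hx.1, hx.2.trans ht.2⟩
    have hcont : ∀ f : ℝ → ℝ, (∀ u ∈ Set.Icc s t, HasDerivAt f (deriv f u) u) →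
        ContinuousOn f (Set.Icc s t) := fun f hf x hx =>
      ((hf x hx).continuousAt).continuousWithinAt
    -- φ = h - (M/r) u^r is antitone, ψ = h + (M/r) u^r is monotone on [s,t]
    have hpow : ∀ u : ℝ, 0 < u →
        HasDerivAt (fun x : ℝ => M / r * x ^ r) (M * u ^ (r - 1)) u := by
      intro u hu
      have := (Real.hasDerivAt_rpow_const (p := r) (Or.inl hu.ne')).const_mul (M / r)
      refine this.congr_deriv ?_
      field_simp
    have hφd : ∀ u ∈ Set.Ioo s t, HasDerivAt (fun x => h x - M / r * x ^ r)
        (u ^ (-q' - 1) * (u * deriv g u - q' * g u) - M * u ^ (r - 1)) u := by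
      intro u hu
      exact (hderiv u (hs0.trans hu.1)).sub (hpow u (hs0.trans hu.1))
    have hψd : ∀ u ∈ Set.Ioo s t, HasDerivAt (fun x => h x + M / r * x ^ r)
        (u ^ (-q' - 1) * (u * deriv g u - q' * g u) + M * u ^ (r - 1)) u := by
      intro u hu
      exact (hderiv u (hs0.trans hu.1)).add (hpow u (hs0.trans hu.1))
    have hφc : ContinuousOn (fun x => h x - M / r * x ^ r) (Set.Icc s t) := by
      intro x hx
      exact (((hderiv x (hs0.trans_le hx.1)).sub (hpow x (hs0.trans_le hx.1))).continuousAt).continuousWithinAt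
    have hψc : ContinuousOn (fun x => h x + M / r * x ^ r) (Set.Icc s t) := by
      intro x hx
      exact (((hderiv x (hs0.trans_le hx.1)).add (hpow x (hs0.trans_le hx.1))).continuousAt).continuousWithinAt
    have hφ : AntitoneOn (fun x => h x - M / r * x ^ r) (Set.Icc s t) := by
      apply antitoneOn_of_deriv_nonpos (convex_Icc s t) hφc
      · intro x hx
        rw [interior_Icc] at hx
        exact (hφd x hx).differentiableAt.differentiableWithinAt
      · intro x hx
        rw [interior_Icc] at hx
        rw [(hφd x hx).deriv]
        have := abs_le.mp (hbound x (hsub ⟨hx.1.le, hx.2.le⟩))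
        linarith [this.2]
    have hψ : MonotoneOn (fun x => h x + M / r * x ^ r) (Set.Icc s t) := by
      apply monotoneOn_of_deriv_nonneg (convex_Icc s t) hψc
      · intro x hx
        rw [interior_Icc] at hx
        exact (hψd x hx).differentiableAt.differentiableWithinAt
      · intro x hx
        rw [interior_Icc] at hx
        rw [(hψd x hx).deriv]
        have := abs_le.mp (hbound x (hsub ⟨hx.1.le, hx.2.le⟩))
        linarith [this.1]
    have hst : s ≤ t := hs.2
    have hmem_s : s ∈ Set.Icc s t := ⟨le_refl s, hst⟩
    have hmem_t : t ∈ Set.Icc s t := ⟨hst, le_refl t⟩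
    have e1 : h t - M / r * t ^ r ≤ h s - M / r * s ^ r := hφ hmem_s hmem_t hst
    have e2 : h s + M / r * s ^ r ≤ h t + M / r * t ^ r := hψ hmem_s hmem_t hst
    have hsr : 0 ≤ M / r * s ^ r := by positivity
    rcases abs_cases (h t) with ⟨he, _⟩ | ⟨he, _⟩ <;> rw [he]
    · calc h t ≤ h s - M / r * s ^ r + M / r * t ^ r := by linarith
        _ ≤ |h s| + M / r * t ^ r := by
          have := le_abs_self (h s); linarith
    · calc -h t ≤ -h s + M / r * t ^ r - M / r * s ^ r := by linarith
        _ ≤ |h s| + M / r * t ^ r := by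
          have := neg_le_abs (h s); linarith
  -- |h s| ≤ C * s^ε → 0
  have hC0 : 0 ≤ C := by
    have := (abs_nonneg (g 1)).trans (hC 1 ⟨one_pos, le_refl 1⟩)
    simpa using this
  have hhs : ∀ s ∈ Set.Ioc (0 : ℝ) 1, |h s| ≤ C * s ^ ε := by
    intro s hs
    have hs0 : (0 : ℝ) < s := hs.1
    rw [hh]
    simp only
    rw [abs_mul, abs_of_nonneg (Real.rpow_nonneg hs0.le _)]
    calc s ^ (-q') * |g s| ≤ s ^ (-q') * (C * s ^ (q' + ε)) :=
        mul_le_mul_of_nonneg_left (hC s hs) (Real.rpow_nonneg hs0.le _)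
      _ = C * s ^ ε := by
        have h1 : s ^ (-q') * s ^ (q' + ε) = s ^ ε := by
          rw [← Real.rpow_add hs0]; ring_nf
        rw [mul_left_comm, h1]
  -- take limit s → 0+
  have hlim : Filter.Tendsto (fun s : ℝ => C * s ^ ε) (nhdsWithin 0 (Set.Ioi 0)) (nhds 0) := by
    have : Filter.Tendsto (fun s : ℝ => s ^ ε) (nhds 0) (nhds ((0 : ℝ) ^ ε)) :=
      (Real.continuousAt_rpow_const 0 ε (Or.inr hε.le)).tendsto
    rw [Real.zero_rpow hε.ne'] at this
    have h2 : Filter.Tendsto (fun s : ℝ => C * s ^ ε) (nhdsWithin 0 (Set.Ioi 0))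
        (nhds (C * 0)) := (this.const_mul C).mono_left nhdsWithin_le_nhds
    simpa using h2
  have hht : |h t| ≤ M / r * t ^ r := by
    have hev : ∀ᶠ s in nhdsWithin (0 : ℝ) (Set.Ioi 0), |h t| - M / r * t ^ r ≤ C * s ^ ε := by
      filter_upwards [Ioo_mem_nhdsGT_of_mem (Set.left_mem_Ico.mpr ht0)] with s hs
      have hs' : s ∈ Set.Ioc (0 : ℝ) t := ⟨hs.1, hs.2.le⟩
      have := key s hs'
      have := hhs s ⟨hs.1, hs.2.le.trans ht.2⟩
      linarith
    have := ge_of_tendsto hlim hev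
    linarith
  -- conclude
  have hgt : g t = t ^ q' * h t := by
    rw [hh]; simp only
    rw [← mul_assoc, ← Real.rpow_add ht0]
    simp
  rw [hgt, abs_mul, abs_of_nonneg (Real.rpow_nonneg ht0.le _)]
  calc t ^ q' * |h t| ≤ t ^ q' * (M / r * t ^ r) :=
      mul_le_mul_of_nonneg_left hht (Real.rpow_nonneg ht0.le _)
    _ = (q - q')⁻¹ * M * t ^ q := by
      rw [show (q : ℝ) = q' + r by rw [hrdef]; ring, Real.rpow_add ht0]
      rw [hrdef]; ring
end

section
/- Let τ be a smooth function on an open set of Minkowski space ℝ^(1+n) with ∂_t τ ≠ 0, and define W = -∇_ατ ∇^α t = ∂τ/∂t, V^i = ∇_ατ ∇^α x^i = ∂τ/∂x^i, Ω² = -∇_ατ∇^ατ = W² - Σ_i (V^i)². Suppose τ satisfies τ □τ = κ(1 - Ω²) for a constant κ. Then W satisfies τ²□W = -κ(1-Ω²)W - κ W τ∂_τ Ω², where ∂_τ denotes differentiation in the coordinate system (τ, z) with z^i = x^i (so ∂_t = W ∂_τ). -/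
/-- Time derivative of a function of `(t, x)`. -/
noncomputable def dT {n : ℕ} (φ : ℝ → (Fin n → ℝ) → ℝ) : ℝ → (Fin n → ℝ) → ℝ :=
  fun t x => deriv (fun s => φ s x) t

/-- Spatial partial derivative in the `i`-th coordinate. -/
noncomputable def dX {n : ℕ} (i : Fin n) (φ : ℝ → (Fin n → ℝ) → ℝ) :
    ℝ → (Fin n → ℝ) → ℝ :=
  fun t x => deriv (fun s => φ t (Function.update x i s)) (x i)

/-- The Minkowski wave operator `□ = -∂_t² + Δ`. -/
noncomputable def box {n : ℕ} (φ : ℝ → (Fin n → ℝ) → ℝ) : ℝ → (Fin n → ℝ) → ℝ :=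
  fun t x => -(dT (dT φ) t x) + ∑ i, dX i (dX i φ) t x

/-- `W = ∂_t τ`, the time component of the Jacobian of `(t,x) ↦ (τ,z)`. -/
noncomputable def Wf {n : ℕ} (τ : ℝ → (Fin n → ℝ) → ℝ) : ℝ → (Fin n → ℝ) → ℝ := dT τ

/-- `V^i = ∂_{x^i} τ`. -/
noncomputable def Vf {n : ℕ} (i : Fin n) (τ : ℝ → (Fin n → ℝ) → ℝ) :
    ℝ → (Fin n → ℝ) → ℝ := dX i τ

/-- `Ω² = -∇_ατ ∇^ατ = W² - Σ (V^i)²`. -/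
noncomputable def Om2 {n : ℕ} (τ : ℝ → (Fin n → ℝ) → ℝ) : ℝ → (Fin n → ℝ) → ℝ :=
  fun t x => (Wf τ t x) ^ 2 - ∑ i, (Vf i τ t x) ^ 2

/-- The coordinate derivative `∂_τ` of the `(τ, z)` coordinate system, expressed in
`(t,x)` coordinates: `∂_τ = W⁻¹ ∂_t`. -/
noncomputable def Dtau {n : ℕ} (τ F : ℝ → (Fin n → ℝ) → ℝ) : ℝ → (Fin n → ℝ) → ℝ :=
  fun t x => (Wf τ t x)⁻¹ * dT F t x

/-- The coordinate derivative `∂_{z^i}` of the `(τ, z)` coordinate system, expressed in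
`(t,x)` coordinates: `∂_{z^i} = ∂_{x^i} - (V_i/W) ∂_t` (so `∂_{x^i} = V_i ∂_τ + ∂_{z^i}`). -/
noncomputable def Dz {n : ℕ} (i : Fin n) (τ F : ℝ → (Fin n → ℝ) → ℝ) :
    ℝ → (Fin n → ℝ) → ℝ :=
  fun t x => dX i F t x - (Vf i τ t x / Wf τ t x) * dT F t x


namespace Stmt12Aux

variable {n : ℕ}

abbrev E (n : ℕ) := ℝ × (Fin n → ℝ)

def e0 : E n := (1, 0)
def ee (i : Fin n) : E n := (0, Pi.single i 1)

noncomputable def DD (v : E n) (F : E n → ℝ) : E n → ℝ := fun q => fderiv ℝ F q v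

lemma contDiff_DD (v : E n) {F : E n → ℝ} (hF : ContDiff ℝ (⊤ : ℕ∞) F) :
    ContDiff ℝ (⊤ : ℕ∞) (DD v F) :=
  (hF.fderiv_right (by simp)).clm_apply contDiff_const

lemma hasDerivAt_curveT (x : Fin n → ℝ) (t : ℝ) :
    HasDerivAt (fun s : ℝ => ((s, x) : E n)) e0 t :=
  (hasDerivAt_id t).prodMk (hasDerivAt_const t x)

lemma hasDerivAt_update (x : Fin n → ℝ) (i : Fin n) :
    HasDerivAt (fun s : ℝ => Function.update x i s) ((Pi.single i 1 : Fin n → ℝ)) (x i) := by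
  have h : (fun s : ℝ => Function.update x i s)
      = fun s : ℝ => x + (s - x i) • (Pi.single i 1 : Fin n → ℝ) := by
    funext s j
    rcases eq_or_ne j i with rfl | hj
    · simp only [Function.update_self, Pi.add_apply, Pi.smul_apply, Pi.single_eq_same,
        smul_eq_mul, mul_one]
      ring
    · simp [Function.update_of_ne hj, Pi.single_eq_of_ne hj]
  rw [h]
  have h1 : HasDerivAt (fun s : ℝ => (s - x i)) 1 (x i) := by
    simpa using (hasDerivAt_id (x i)).sub_const (x i)
  simpa using (h1.smul_const (Pi.single i 1 : Fin n → ℝ)).const_add x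

lemma hasDerivAt_curveX (t : ℝ) (x : Fin n → ℝ) (i : Fin n) :
    HasDerivAt (fun s : ℝ => ((t, Function.update x i s) : E n)) (ee i) (x i) :=
  (hasDerivAt_const (x i) t).prodMk (hasDerivAt_update x i)

lemma hasDerivAt_slice {F : E n → ℝ} (hF : ContDiff ℝ (⊤ : ℕ∞) F) (t : ℝ) (x : Fin n → ℝ) :
    HasDerivAt (fun s => F (s, x)) (DD e0 F (t, x)) t :=
  (hF.differentiable (by simp) (t, x)).hasFDerivAt.comp_hasDerivAt t (hasDerivAt_curveT x t)

lemma dT_curry {F : E n → ℝ} (hF : ContDiff ℝ (⊤ : ℕ∞) F) (t : ℝ) (x : Fin n → ℝ) :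
    dT (fun a b => F (a, b)) t x = DD e0 F (t, x) :=
  (hasDerivAt_slice hF t x).deriv

lemma dX_curry {F : E n → ℝ} (hF : ContDiff ℝ (⊤ : ℕ∞) F) (i : Fin n) (t : ℝ) (x : Fin n → ℝ) :
    dX i (fun a b => F (a, b)) t x = DD (ee i) F (t, x) := by
  have hF' : HasFDerivAt F (fderiv ℝ F (t, x)) (t, Function.update x i (x i)) := by
    rw [Function.update_eq_self]
    exact (hF.differentiable (by simp) (t, x)).hasFDerivAt
  have h := hF'.comp_hasDerivAt (x i) (hasDerivAt_curveX t x i)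
  exact h.deriv

lemma DD_comm {F : E n → ℝ} (hF : ContDiff ℝ (⊤ : ℕ∞) F) (v w : E n) (q : E n) :
    DD w (DD v F) q = DD v (DD w F) q := by
  have hd : ∀ y, HasFDerivAt F (fderiv ℝ F y) y := fun y =>
    (hF.differentiable (by simp) y).hasFDerivAt
  have hf' : DifferentiableAt ℝ (fderiv ℝ F) q :=
    ((hF.fderiv_right (m := 1) (WithTop.coe_le_coe.mpr le_top)).differentiable (by simp)) q
  have happ : ∀ v' u : E n, DD u (DD v' F) q = fderiv ℝ (fderiv ℝ F) q u v' := by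
    intro v' u
    have h := ((ContinuousLinearMap.apply ℝ ℝ v').hasFDerivAt
      (x := fderiv ℝ F q)).comp q hf'.hasFDerivAt
    have h2 : fderiv ℝ (DD v' F) q
        = ((ContinuousLinearMap.apply ℝ ℝ v').comp (fderiv ℝ (fderiv ℝ F) q)) := by
      rw [show DD v' F = (⇑(ContinuousLinearMap.apply ℝ ℝ v')) ∘ (fderiv ℝ F) from rfl]
      exact h.fderiv
    show fderiv ℝ (DD v' F) q u = _
    rw [h2]
    rfl
  rw [happ v w, happ w v]
  exact second_derivative_symmetric hd hf'.hasFDerivAt w v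

end Stmt12Aux

open Stmt12Aux

/-- If `τ` satisfies `τ □τ = κ(1 - Ω²)` then the Jacobian coefficient `W = ∂_t τ`
satisfies `τ²□W = -κ(1-Ω²)W - κ W τ ∂_τ Ω²`. -/
theorem stmt_12 (n : ℕ) (κ : ℝ) (τ : ℝ → (Fin n → ℝ) → ℝ)
    (hsmooth : ContDiff ℝ (⊤ : ℕ∞) (fun q : ℝ × (Fin n → ℝ) => τ q.1 q.2))
    (hW : ∀ t x, dT τ t x ≠ 0)
    (heq : ∀ t x, τ t x * box τ t x = κ * (1 - Om2 τ t x)) :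
    ∀ t x, (τ t x) ^ 2 * box (Wf τ) t x
      = -κ * (1 - Om2 τ t x) * Wf τ t x
        - κ * Wf τ t x * (τ t x * Dtau τ (Om2 τ) t x) := by
  intro t x
  set f : E n → ℝ := fun q => τ q.1 q.2 with hfdef
  have hfs : ContDiff ℝ (⊤ : ℕ∞) f := hsmooth
  have hDe0 : ContDiff ℝ (⊤ : ℕ∞) (DD e0 f) := contDiff_DD e0 hfs
  have hDee : ∀ i : Fin n, ContDiff ℝ (⊤ : ℕ∞) (DD (ee i) f) := fun i => contDiff_DD (ee i) hfs
  -- first-order identities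
  have hWf : Wf τ = fun a b => DD e0 f (a, b) :=
    funext fun a => funext fun b => dT_curry hfs a b
  have hVf : ∀ i : Fin n, Vf i τ = fun a b => DD (ee i) f (a, b) := fun i =>
    funext fun a => funext fun b => dX_curry hfs i a b
  -- second-order identities
  have hdTW : dT (Wf τ) = fun a b => DD e0 (DD e0 f) (a, b) := by
    rw [hWf]; exact funext fun a => funext fun b => dT_curry hDe0 a b
  have hdXW : ∀ i : Fin n, dX i (Wf τ) = fun a b => DD e0 (DD (ee i) f) (a, b) := by
    intro i
    rw [hWf]
    funext a b
    rw [dX_curry hDe0 i a b]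
    exact DD_comm hfs e0 (ee i) (a, b)
  have hdXX : ∀ i : Fin n, dX i (dX i τ) = fun a b => DD (ee i) (DD (ee i) f) (a, b) := by
    intro i
    have h0 : dX i τ = fun a b => DD (ee i) f (a, b) := hVf i
    rw [h0]
    exact funext fun a => funext fun b => dX_curry (hDee i) i a b
  -- third-order identities at the point
  have hdTTW : dT (dT (Wf τ)) t x = DD e0 (DD e0 (DD e0 f)) (t, x) := by
    rw [hdTW]; exact dT_curry (contDiff_DD e0 hDe0) t x
  have hdXXW : ∀ i : Fin n,
      dX i (dX i (Wf τ)) t x = DD e0 (DD (ee i) (DD (ee i) f)) (t, x) := by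
    intro i
    rw [hdXW i, dX_curry (contDiff_DD e0 (hDee i)) i t x]
    exact DD_comm (hDee i) e0 (ee i) (t, x)
  -- the uncurried versions of box τ and Om2 τ
  set G : E n → ℝ := fun q => -(DD e0 (DD e0 f) q) + ∑ i, DD (ee i) (DD (ee i) f) q
    with hGdef
  set H : E n → ℝ := fun q => (DD e0 f q) ^ 2 - ∑ i, (DD (ee i) f q) ^ 2 with hHdef
  have hG : ContDiff ℝ (⊤ : ℕ∞) G :=
    (contDiff_DD e0 hDe0).neg.add (ContDiff.sum fun i _ => contDiff_DD (ee i) (hDee i))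
  have hH : ContDiff ℝ (⊤ : ℕ∞) H :=
    (hDe0.pow 2).sub (ContDiff.sum fun i _ => (hDee i).pow 2)
  have hbox : box τ = fun a b => G (a, b) := by
    funext a b
    show -(dT (dT τ) a b) + ∑ i, dX i (dX i τ) a b = _
    have h1 : dT (dT τ) a b = DD e0 (DD e0 f) (a, b) := congrFun (congrFun hdTW a) b
    have h2 : (∑ i, dX i (dX i τ) a b) = ∑ i, DD (ee i) (DD (ee i) f) (a, b) :=
      Finset.sum_congr rfl fun i _ => congrFun (congrFun (hdXX i) a) b
    rw [h1, h2, hGdef]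
  have hOm : Om2 τ = fun a b => H (a, b) := by
    funext a b
    simp only [Om2, hWf, hVf, hHdef]
  -- evaluate DD e0 G
  have hA : Differentiable ℝ (DD e0 (DD e0 f)) := (contDiff_DD e0 hDe0).differentiable (by simp)
  have hB : ∀ i : Fin n, Differentiable ℝ (DD (ee i) (DD (ee i) f)) := fun i =>
    (contDiff_DD (ee i) (contDiff_DD (ee i) hfs)).differentiable (by simp)
  have hG_eval : DD e0 G (t, x) = -(DD e0 (DD e0 (DD e0 f)) (t, x))
      + ∑ i, DD e0 (DD (ee i) (DD (ee i) f)) (t, x) := by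
    have hhG : HasFDerivAt G ((-(fderiv ℝ (DD e0 (DD e0 f)) (t, x)))
        + ∑ i, fderiv ℝ (DD (ee i) (DD (ee i) f)) (t, x)) (t, x) := by
      rw [hGdef]
      exact ((hA (t, x)).hasFDerivAt.neg).add
        (HasFDerivAt.fun_sum fun i _ => (hB i (t, x)).hasFDerivAt)
    show fderiv ℝ G (t, x) e0 = _
    rw [hhG.fderiv]
    simp [DD, ContinuousLinearMap.sum_apply]
  -- box (Wf τ) at the point
  have hboxW : box (Wf τ) t x = DD e0 G (t, x) := by
    rw [hG_eval]
    show -(dT (dT (Wf τ)) t x) + ∑ i, dX i (dX i (Wf τ)) t x = _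
    have h2 : (∑ i, dX i (dX i (Wf τ)) t x)
        = ∑ i, DD e0 (DD (ee i) (DD (ee i) f)) (t, x) :=
      Finset.sum_congr rfl fun i _ => hdXXW i
    rw [hdTTW, h2]
  -- differentiate the field equation in t
  have ha : HasDerivAt (fun s => τ s x) (DD e0 f (t, x)) t := hasDerivAt_slice hfs t x
  have hb : HasDerivAt (fun s => box τ s x) (DD e0 G (t, x)) t := by
    rw [hbox]; exact hasDerivAt_slice hG t x
  have hc : HasDerivAt (fun s => Om2 τ s x) (DD e0 H (t, x)) t := by
    rw [hOm]; exact hasDerivAt_slice hH t x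
  have h1 : HasDerivAt (fun s => τ s x * box τ s x)
      (DD e0 f (t, x) * box τ t x + τ t x * DD e0 G (t, x)) t := ha.mul hb
  have hfe : (fun s => τ s x * box τ s x) = fun s => κ * (1 - Om2 τ s x) :=
    funext fun s => heq s x
  have h2 : HasDerivAt (fun s => τ s x * box τ s x) (κ * -(DD e0 H (t, x))) t := by
    rw [hfe]
    simpa using ((hc.const_sub 1).const_mul κ)
  have hkey : DD e0 f (t, x) * box τ t x + τ t x * DD e0 G (t, x)
      = κ * -(DD e0 H (t, x)) := h1.unique h2
  -- assemble
  have hWtx : Wf τ t x = DD e0 f (t, x) := congrFun (congrFun hWf t) x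
  have hdtOm : dT (Om2 τ) t x = DD e0 H (t, x) := by
    rw [hOm]; exact dT_curry hH t x
  have hW' : DD e0 f (t, x) ≠ 0 := by rw [← hWtx]; exact hW t x
  have hWD : DD e0 f (t, x) * ((DD e0 f (t, x))⁻¹ * DD e0 H (t, x)) = DD e0 H (t, x) := by
    field_simp
  have heqtx := heq t x
  simp only [Dtau]
  rw [hboxW, hWtx, hdtOm]
  linear_combination τ t x * hkey - DD e0 f (t, x) * heqtx + κ * τ t x * hWD
end

section
/- Under the same hypotheses (τ with τ□τ = κ(1-Ω²), W = ∂_tτ, V^i = ∂_{x^i}τ, Ω² = W² - Σ(V^i)²), the components V^i satisfy τ²□V^i = -κ(1-Ω²)V^i - κ V^i τ∂_τΩ² - κ τ ∂_{z^i}Ω², where (τ, z^i) are the coordinates with z^i = x^i, and ∂_{x^i}|_t = V_i ∂_τ + ∂_{z^i}. -/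
namespace Aux13

variable {n : ℕ}

/-- Uncurried version. -/
def unc (φ : ℝ → (Fin n → ℝ) → ℝ) : ℝ × (Fin n → ℝ) → ℝ := fun q => φ q.1 q.2

lemma hasDerivAt_T (φ : ℝ → (Fin n → ℝ) → ℝ) {t : ℝ} {x : Fin n → ℝ}
    (h : DifferentiableAt ℝ (unc φ) (t, x)) :
    HasDerivAt (fun s => φ s x) (fderiv ℝ (unc φ) (t, x) (1, 0)) t := by
  have hc : HasDerivAt (fun s : ℝ => (s, x)) ((1 : ℝ), (0 : Fin n → ℝ)) t :=
    (hasDerivAt_id t).prodMk (hasDerivAt_const t x)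
  exact h.hasFDerivAt.comp_hasDerivAt t hc

lemma hasDerivAt_X (φ : ℝ → (Fin n → ℝ) → ℝ) (i : Fin n) {t : ℝ} {x : Fin n → ℝ}
    (h : DifferentiableAt ℝ (unc φ) (t, x)) :
    HasDerivAt (fun s => φ t (Function.update x i s))
      (fderiv ℝ (unc φ) (t, x) (0, Pi.single i 1)) (x i) := by
  have hc : HasDerivAt (fun s : ℝ => ((t : ℝ), Function.update x i s))
      ((0 : ℝ), Pi.single i (1 : ℝ)) (x i) :=
    (hasDerivAt_const (x i) t).prodMk (hasDerivAt_update x i (x i))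
  exact h.hasFDerivAt.comp_hasDerivAt_of_eq (x i) hc
    (by simp [Function.update_eq_self])

lemma dT_eq (φ : ℝ → (Fin n → ℝ) → ℝ) {t : ℝ} {x : Fin n → ℝ}
    (h : DifferentiableAt ℝ (unc φ) (t, x)) :
    dT φ t x = fderiv ℝ (unc φ) (t, x) (1, 0) := (hasDerivAt_T φ h).deriv

lemma dX_eq (φ : ℝ → (Fin n → ℝ) → ℝ) (i : Fin n) {t : ℝ} {x : Fin n → ℝ}
    (h : DifferentiableAt ℝ (unc φ) (t, x)) :
    dX i φ t x = fderiv ℝ (unc φ) (t, x) (0, Pi.single i 1) := (hasDerivAt_X φ i h).deriv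

lemma smooth_dir (φ : ℝ → (Fin n → ℝ) → ℝ) (h : ContDiff ℝ (⊤ : ℕ∞) (unc φ))
    (v : ℝ × (Fin n → ℝ)) : ContDiff ℝ (⊤ : ℕ∞) (fun q => fderiv ℝ (unc φ) q v) :=
  (ContinuousLinearMap.apply ℝ ℝ v).contDiff.comp (h.fderiv_right (by simp))

lemma unc_dT (φ : ℝ → (Fin n → ℝ) → ℝ) (h : ContDiff ℝ (⊤ : ℕ∞) (unc φ)) :
    unc (dT φ) = fun q => fderiv ℝ (unc φ) q (1, 0) := by
  funext q
  exact dT_eq φ (h.differentiable (by simp) _)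

lemma unc_dX (φ : ℝ → (Fin n → ℝ) → ℝ) (i : Fin n) (h : ContDiff ℝ (⊤ : ℕ∞) (unc φ)) :
    unc (dX i φ) = fun q => fderiv ℝ (unc φ) q (0, Pi.single i 1) := by
  funext q
  exact dX_eq φ i (h.differentiable (by simp) _)

lemma smooth_dT (φ : ℝ → (Fin n → ℝ) → ℝ) (h : ContDiff ℝ (⊤ : ℕ∞) (unc φ)) :
    ContDiff ℝ (⊤ : ℕ∞) (unc (dT φ)) := by rw [unc_dT φ h]; exact smooth_dir φ h _

lemma smooth_dX (φ : ℝ → (Fin n → ℝ) → ℝ) (i : Fin n) (h : ContDiff ℝ (⊤ : ℕ∞) (unc φ)) :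
    ContDiff ℝ (⊤ : ℕ∞) (unc (dX i φ)) := by rw [unc_dX φ i h]; exact smooth_dir φ h _

lemma fderiv_dir (φ : ℝ → (Fin n → ℝ) → ℝ) (h : ContDiff ℝ (⊤ : ℕ∞) (unc φ))
    (v w p : ℝ × (Fin n → ℝ)) :
    fderiv ℝ (fun q => fderiv ℝ (unc φ) q v) p w = fderiv ℝ (fderiv ℝ (unc φ)) p w v := by
  have hdd : DifferentiableAt ℝ (fderiv ℝ (unc φ)) p :=
    ((h.fderiv_right (m := (⊤ : ℕ∞)) (by simp)).differentiable (by simp)) p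
  have h2 := (ContinuousLinearMap.apply ℝ ℝ v).hasFDerivAt.comp p hdd.hasFDerivAt
  have h3 : fderiv ℝ (fun q => fderiv ℝ (unc φ) q v) p
      = (ContinuousLinearMap.apply ℝ ℝ v).comp (fderiv ℝ (fderiv ℝ (unc φ)) p) :=
    h2.fderiv
  rw [h3]; rfl

lemma dir_comm (φ : ℝ → (Fin n → ℝ) → ℝ) (h : ContDiff ℝ (⊤ : ℕ∞) (unc φ))
    (v w p : ℝ × (Fin n → ℝ)) :
    fderiv ℝ (fun q => fderiv ℝ (unc φ) q v) p w
      = fderiv ℝ (fun q => fderiv ℝ (unc φ) q w) p v := by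
  rw [fderiv_dir φ h, fderiv_dir φ h]
  exact (h.contDiffAt.isSymmSndFDerivAt (by rw [minSmoothness_of_isRCLikeNormedField]; exact WithTop.coe_le_coe.mpr le_top)) w v

lemma dT_dX_comm (φ : ℝ → (Fin n → ℝ) → ℝ) (h : ContDiff ℝ (⊤ : ℕ∞) (unc φ)) (i : Fin n) :
    dT (dX i φ) = dX i (dT φ) := by
  funext t x
  have h1 : dT (dX i φ) t x = fderiv ℝ (unc (dX i φ)) (t, x) (1, 0) :=
    dT_eq _ ((smooth_dX φ i h).differentiable (by simp) _)
  have h2 : dX i (dT φ) t x = fderiv ℝ (unc (dT φ)) (t, x) (0, Pi.single i 1) :=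
    dX_eq _ i ((smooth_dT φ h).differentiable (by simp) _)
  rw [h1, h2, unc_dX φ i h, unc_dT φ h]
  exact dir_comm φ h _ _ _

lemma dX_dX_comm (φ : ℝ → (Fin n → ℝ) → ℝ) (h : ContDiff ℝ (⊤ : ℕ∞) (unc φ)) (i j : Fin n) :
    dX i (dX j φ) = dX j (dX i φ) := by
  funext t x
  have h1 : dX i (dX j φ) t x = fderiv ℝ (unc (dX j φ)) (t, x) (0, Pi.single i 1) :=
    dX_eq _ i ((smooth_dX φ j h).differentiable (by simp) _)
  have h2 : dX j (dX i φ) t x = fderiv ℝ (unc (dX i φ)) (t, x) (0, Pi.single j 1) :=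
    dX_eq _ j ((smooth_dX φ i h).differentiable (by simp) _)
  rw [h1, h2, unc_dX φ i h, unc_dX φ j h]
  exact dir_comm φ h _ _ _


lemma hX (ψ : ℝ → (Fin n → ℝ) → ℝ) (h : ContDiff ℝ (⊤ : ℕ∞) (unc ψ)) (i : Fin n)
    (t : ℝ) (x : Fin n → ℝ) :
    HasDerivAt (fun s => ψ t (Function.update x i s)) (dX i ψ t x) (x i) := by
  have hd := h.differentiable (by simp) (t, x)
  have h2 := hasDerivAt_X ψ i hd
  rwa [← dX_eq ψ i hd] at h2

lemma smooth_box (φ : ℝ → (Fin n → ℝ) → ℝ) (h : ContDiff ℝ (⊤ : ℕ∞) (unc φ)) :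
    ContDiff ℝ (⊤ : ℕ∞) (unc (box φ)) := by
  have : unc (box φ)
      = fun q => -(unc (dT (dT φ)) q) + ∑ j, unc (dX j (dX j φ)) q := rfl
  rw [this]
  exact (smooth_dT _ (smooth_dT _ h)).neg.add
    (ContDiff.sum fun j _ => smooth_dX _ j (smooth_dX _ j h))

lemma dX_box (φ : ℝ → (Fin n → ℝ) → ℝ) (h : ContDiff ℝ (⊤ : ℕ∞) (unc φ)) (i : Fin n)
    (t : ℝ) (x : Fin n → ℝ) :
    dX i (box φ) t x = box (dX i φ) t x := by
  have hA : HasDerivAt (fun s => box φ t (Function.update x i s))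
      (-(dX i (dT (dT φ)) t x) + ∑ j, dX i (dX j (dX j φ)) t x) (x i) := by
    have h1 := (hX (dT (dT φ)) (smooth_dT _ (smooth_dT _ h)) i t x).neg
    have h2 := HasDerivAt.fun_sum (fun j (_ : j ∈ Finset.univ) =>
      hX (dX j (dX j φ)) (smooth_dX _ j (smooth_dX _ j h)) i t x)
    exact h1.add h2
  have := hA.deriv
  have hgoal : dX i (box φ) t x
      = -(dX i (dT (dT φ)) t x) + ∑ j, dX i (dX j (dX j φ)) t x := this
  rw [hgoal]
  have e1 : dX i (dT (dT φ)) = dT (dT (dX i φ)) := by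
    rw [← dT_dX_comm (dT φ) (smooth_dT _ h) i, dT_dX_comm φ h i]
  have e2 : ∀ j : Fin n, dX i (dX j (dX j φ)) = dX j (dX j (dX i φ)) := fun j => by
    rw [dX_dX_comm (dX j φ) (smooth_dX _ j h) i j, dX_dX_comm φ h i j]
  rw [e1]
  simp only [box]
  congr 1
  exact Finset.sum_congr rfl fun j _ => by rw [e2 j]


lemma smooth_Om2 (τ : ℝ → (Fin n → ℝ) → ℝ) (h : ContDiff ℝ (⊤ : ℕ∞) (unc τ)) :
    ContDiff ℝ (⊤ : ℕ∞) (unc (Om2 τ)) := by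
  have : unc (Om2 τ)
      = fun q => (unc (dT τ) q) ^ 2 - ∑ j, (unc (dX j τ) q) ^ 2 := rfl
  rw [this]
  exact ((smooth_dT _ h).pow 2).sub
    (ContDiff.sum fun j _ => (smooth_dX _ j h).pow 2)

end Aux13

/-- If `τ` satisfies `τ □τ = κ(1 - Ω²)` then the Jacobian coefficients `V^i = ∂_{x^i} τ`
satisfy `τ²□V^i = -κ(1-Ω²)V^i - κ V^i τ ∂_τ Ω² - κ τ ∂_{z^i} Ω²`. -/
theorem stmt_13 (n : ℕ) (κ : ℝ) (τ : ℝ → (Fin n → ℝ) → ℝ)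
    (hsmooth : ContDiff ℝ (⊤ : ℕ∞) (fun q : ℝ × (Fin n → ℝ) => τ q.1 q.2))
    (hW : ∀ t x, dT τ t x ≠ 0)
    (heq : ∀ t x, τ t x * box τ t x = κ * (1 - Om2 τ t x)) :
    ∀ (i : Fin n), ∀ t x, (τ t x) ^ 2 * box (Vf i τ) t x
      = -κ * (1 - Om2 τ t x) * Vf i τ t x
        - κ * Vf i τ t x * (τ t x * Dtau τ (Om2 τ) t x)
        - κ * (τ t x * Dz i τ (Om2 τ) t x) := by
  intro i t x
  have hτ : ContDiff ℝ (⊤ : ℕ∞) (Aux13.unc τ) := hsmooth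
  have hbox := Aux13.smooth_box τ hτ
  have hom := Aux13.smooth_Om2 τ hτ
  have hA : HasDerivAt (fun s => τ t (Function.update x i s) * box τ t (Function.update x i s))
      (dX i τ t x * box τ t x + τ t x * dX i (box τ) t x) (x i) := by
    have := (Aux13.hX τ hτ i t x).fun_mul (Aux13.hX (box τ) hbox i t x)
    simpa [Function.update_eq_self] using this
  have hB : HasDerivAt (fun s => κ * (1 - Om2 τ t (Function.update x i s)))
      (κ * (0 - dX i (Om2 τ) t x)) (x i) := by
    have := (((hasDerivAt_const (x i) (1 : ℝ)).sub (Aux13.hX (Om2 τ) hom i t x)).const_mul κ)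
    simpa using this
  have hfun : (fun s => τ t (Function.update x i s) * box τ t (Function.update x i s))
      = fun s => κ * (1 - Om2 τ t (Function.update x i s)) :=
    funext fun s => heq t (Function.update x i s)
  rw [hfun] at hA
  have huniq := hA.unique hB
  have hc : box (Vf i τ) t x = dX i (box τ) t x := by
    show box (dX i τ) t x = _
    rw [Aux13.dX_box τ hτ i t x]
  rw [hc]
  simp only [Dtau, Dz, Vf, Wf]
  linear_combination τ t x * huniq - dX i τ t x * heq t x
end

section
/- Let τ satisfy τ□τ = κ(1 - Ω²) with W = ∂_tτ > 0, V^i = ∂_{x^i}τ, U^i = V^i/W, Ω² = W² - Σ(V^i)² = W²(1 - Σ(U^i)²), and define Ω̊² = Ω² - 1. Then in (τ, z) coordinates, τ ∂_τ Ω̊² = 2κ Ω̊² + 2τ ∂_{z^i} V^i (summing over i). -/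
/-- If `τ` satisfies `τ □τ = κ(1 - Ω²)` with `W = ∂_t τ > 0`, then
`Ω̊² = Ω² - 1` satisfies the first-order equation
`τ ∂_τ Ω̊² = 2κ Ω̊² + 2 τ Σ_i ∂_{z^i} V^i` in `(τ, z)` coordinates. -/
theorem stmt_15 (n : ℕ) (κ : ℝ) (τ : ℝ → (Fin n → ℝ) → ℝ)
    (hsmooth : ContDiff ℝ (⊤ : ℕ∞) (fun q : ℝ × (Fin n → ℝ) => τ q.1 q.2))
    (hW : ∀ t x, 0 < dT τ t x)
    (heq : ∀ t x, τ t x * box τ t x = κ * (1 - Om2 τ t x)) :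
    ∀ t x, τ t x * Dtau τ (fun t x => Om2 τ t x - 1) t x
      = 2 * κ * (Om2 τ t x - 1) + 2 * (τ t x * ∑ i, Dz i τ (Vf i τ) t x) := by
  intro t x
  set F : ℝ × (Fin n → ℝ) → ℝ := fun q => τ q.1 q.2 with hFdef
  have hF : ContDiff ℝ (⊤ : ℕ∞) F := hsmooth
  -- dT τ in terms of fderiv F
  have hA : ∀ (s : ℝ) (y : Fin n → ℝ), dT τ s y = fderiv ℝ F (s, y) (1, 0) := by
    intro s y
    have hline : HasDerivAt (fun u : ℝ => ((u, y) : ℝ × (Fin n → ℝ))) (1, 0) s :=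
      (hasDerivAt_id s).prodMk (hasDerivAt_const s y)
    have hFd : HasFDerivAt F (fderiv ℝ F (s, y)) (s, y) :=
      (hF.differentiable (by simp) (s, y)).hasFDerivAt
    exact (by have := (hFd.comp_hasDerivAt s hline).deriv; exact this :
      deriv (fun u => τ u y) s = fderiv ℝ F (s, y) (1, 0))
  have hB : ∀ (i : Fin n) (s : ℝ) (y : Fin n → ℝ),
      dX i τ s y = fderiv ℝ F (s, y) (0, Pi.single i 1) := by
    intro i s y
    have hline : HasDerivAt (fun u : ℝ => ((s, Function.update y i u) : ℝ × (Fin n → ℝ)))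
        (0, Pi.single i 1) (y i) :=
      (hasDerivAt_const (y i) s).prodMk (hasDerivAt_update y i (y i))
    have hFd : HasFDerivAt F (fderiv ℝ F (s, y)) (s, Function.update y i (y i)) := by
      rw [Function.update_eq_self]
      exact (hF.differentiable (by simp) (s, y)).hasFDerivAt
    exact (by have := (hFd.comp_hasDerivAt (y i) hline).deriv; exact this :
      deriv (fun u => τ s (Function.update y i u)) (y i)
        = fderiv ℝ F (s, y) (0, Pi.single i 1))
  -- smoothness of directional derivatives
  have hg : ContDiff ℝ (⊤ : ℕ∞) (fderiv ℝ F) := hF.fderiv_right (by simp)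
  have hdir : ∀ (v : ℝ × (Fin n → ℝ)),
      DifferentiableAt ℝ (fun s : ℝ => fderiv ℝ F (s, x) v) t := by
    intro v
    have h1 : DifferentiableAt ℝ (fun q => fderiv ℝ F q v) (t, x) :=
      ((hg.differentiable (by simp)) (t, x)).clm_apply (differentiableAt_const v)
    exact h1.comp t ((differentiableAt_id (𝕜 := ℝ) (x := t)).prodMk (differentiableAt_const x))
  have hwd : DifferentiableAt ℝ (fun s => Wf τ s x) t := by
    have h := hdir (1, 0)
    rwa [show (fun s => fderiv ℝ F (s, x) (1, 0)) = fun s => Wf τ s x from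
      funext fun s => (hA s x).symm] at h
  have hvd : ∀ i : Fin n, DifferentiableAt ℝ (fun s => Vf i τ s x) t := by
    intro i
    have h := hdir (0, Pi.single i 1)
    rwa [show (fun s => fderiv ℝ F (s, x) (0, Pi.single i 1)) = fun s => Vf i τ s x from
      funext fun s => (hB i s x).symm] at h
  -- derivative of Om2 in t
  have hOm : HasDerivAt (fun s => Om2 τ s x)
      (2 * Wf τ t x * deriv (fun s => Wf τ s x) t
        - ∑ i, 2 * Vf i τ t x * deriv (fun s => Vf i τ s x) t) t := by
    have h1 : HasDerivAt (fun s => (Wf τ s x) ^ 2)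
        (2 * Wf τ t x * deriv (fun s => Wf τ s x) t) t := by
      have := (hwd.hasDerivAt).fun_pow 2
      simpa [mul_comm, mul_assoc, mul_left_comm] using this
    have h2 : HasDerivAt (fun s => ∑ i, (Vf i τ s x) ^ 2)
        (∑ i, 2 * Vf i τ t x * deriv (fun s => Vf i τ s x) t) t := by
      apply HasDerivAt.fun_sum
      intro i _
      have := ((hvd i).hasDerivAt).fun_pow 2
      simpa [mul_comm, mul_assoc, mul_left_comm] using this
    simpa [Om2] using h1.fun_sub h2
  -- abbreviations
  set W := Wf τ t x with hWdef
  set w' := deriv (fun s => Wf τ s x) t with hw'def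
  have hWpos : 0 < W := hW t x
  have hWne : W ≠ 0 := ne_of_gt hWpos
  -- heq reformulated
  have heq' : τ t x * (-w' + ∑ i, dX i (Vf i τ) t x) = κ * (1 - Om2 τ t x) := heq t x
  -- the goal
  have hderiv : dT (fun t x => Om2 τ t x - 1) t x
      = 2 * W * w' - ∑ i, 2 * Vf i τ t x * deriv (fun s => Vf i τ s x) t := by
    show deriv (fun s => Om2 τ s x - 1) t = _
    rw [deriv_sub_const, hOm.deriv]
  show τ t x * (W⁻¹ * dT (fun t x => Om2 τ t x - 1) t x) = _
  rw [hderiv]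
  simp only [Dz]
  have hsum : ∀ i : Fin n, Vf i τ t x / W * dT (Vf i τ) t x
      = W⁻¹ * (Vf i τ t x * deriv (fun s => Vf i τ s x) t) := by
    intro i; rw [div_eq_inv_mul]; ring_nf; rfl
  rw [Finset.sum_sub_distrib]
  simp only [← hWdef, hsum]
  rw [← Finset.mul_sum]
  set SA := ∑ i, dX i (Vf i τ) t x
  set S1 := ∑ i : Fin n, Vf i τ t x * deriv (fun s => Vf i τ s x) t
  have hS2 : (∑ i : Fin n, 2 * Vf i τ t x * deriv (fun s => Vf i τ s x) t) = 2 * S1 := by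
    rw [Finset.mul_sum]; congr 1; funext i; ring
  rw [hS2]
  field_simp
  linear_combination (-W) * heq'
end
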